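/- arXiv:2502.19487 — 2 statements merged into one kernel-verified Lean document; each statement's English description precedes it below -/
import Mathlib

section
/- With I^{FB}_{ij}(φ) = Σ_{k,ℓ<d} (2/(λ_k + λ_ℓ)) ⟨k| D_i |ℓ⟩ ⟨ℓ| D_j |k⟩ (where D_i = ∂_i ρ(φ)), the following intermediate identity holds for all i, j ∈ {1,…,J}: I^{FB}_{ij}(φ) = 2 · Tr[{A_i, A_j} ρ] − 8 · Σ_{k,ℓ<d} (λ_k λ_ℓ/(λ_k + λ_ℓ)) ⟨k̃| A_i |ℓ̃⟩ ⟨ℓ̃| A_j |k̃⟩, where {X,Y} = XY + YX and A_j = U_{R_j}† H_j U_{R_j}. -/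
open Matrix

noncomputable section

attribute [local instance] Matrix.linftyOpNormedAddCommGroup Matrix.linftyOpNormedSpace

/-- Square complex matrices of size `d`. -/
abbrev Mat (d : ℕ) := Matrix (Fin d) (Fin d) ℂ

/-- Descending product `f (a + n - 1) * ⋯ * f (a + 1) * f a` (empty product is `1`). -/
def descProd {d : ℕ} (f : ℕ → Mat d) (a : ℕ) : ℕ → Mat d
  | 0 => 1
  | n + 1 => f (a + n) * descProd f a n

/-- The `j`-th layer `U_j(φ_j) = exp (−i φ_j H_j) V_j`. -/
def layer {d : ℕ} (H V : ℕ → Mat d) (φ : ℕ → ℝ) (j : ℕ) : Mat d :=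
  NormedSpace.exp ((-(Complex.I * (φ j : ℂ))) • H j) * V j

/-- `U_{R_j} = U_j ⋯ U_1`. -/
def UR {d : ℕ} (H V : ℕ → Mat d) (φ : ℕ → ℝ) (j : ℕ) : Mat d :=
  descProd (layer H V φ) 1 j

/-- `U_{L_j} = U_J ⋯ U_j`. -/
def UL {d : ℕ} (H V : ℕ → Mat d) (φ : ℕ → ℝ) (J j : ℕ) : Mat d :=
  descProd (layer H V φ) j (J + 1 - j)

/-- The full layered circuit `U(φ) = U_J ⋯ U_1`. -/
def Ufull {d : ℕ} (H V : ℕ → Mat d) (φ : ℕ → ℝ) (J : ℕ) : Mat d :=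
  UR H V φ J

/-- `B_j = U_{L_{j+1}} H_j U_{L_{j+1}}†`. -/
def Bmat {d : ℕ} (H V : ℕ → Mat d) (φ : ℕ → ℝ) (J j : ℕ) : Mat d :=
  UL H V φ J (j + 1) * H j * (UL H V φ J (j + 1))ᴴ

/-- `A_j = U_{R_j}† H_j U_{R_j}`. -/
def Amat {d : ℕ} (H V : ℕ → Mat d) (φ : ℕ → ℝ) (j : ℕ) : Mat d :=
  (UR H V φ j)ᴴ * H j * UR H V φ j

/-- The thermal state `ρ = e^{−G}/Z`. -/
def thermal {d : ℕ} (G : Mat d) (Z : ℝ) : Mat d :=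
  (Z : ℂ)⁻¹ • NormedSpace.exp (-G)

/-- The parameterized state `ρ(φ) = U(φ) ρ U(φ)†`. -/
def rhoFun {d : ℕ} (H V : ℕ → Mat d) (J : ℕ) (G : Mat d) (Z : ℝ) (φ : ℕ → ℝ) : Mat d :=
  Ufull H V φ J * thermal G Z * (Ufull H V φ J)ᴴ

/-- The sesquilinear form `⟨u| M |v⟩`, conjugate-linear in `u`. -/
def braket {d : ℕ} (u : Fin d → ℂ) (M : Mat d) (v : Fin d → ℂ) : ℂ :=
  star u ⬝ᵥ M.mulVec v

/-!
Shifting `φᵢ` by `δ` turns `U(φ)` into `U(φ) exp (−i δ Aᵢ)`, so `∂ᵢρ(φ) = −i U [Aᵢ, ρ] U†`.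
Conjugating by `U` and by the unitary whose columns are the eigenvectors `|k̃⟩` of `ρ`, which
diagonalises `ρ` to `Λ = diag λ`, gives `⟨k| ∂ᵢρ |ℓ⟩ = −i (λ_ℓ − λ_k) ⟨k̃| Aᵢ |ℓ̃⟩`. The
Fisher–Bures sum then carries the weights `2 (λ_k − λ_ℓ)² / (λ_k + λ_ℓ) =
2 (λ_k + λ_ℓ) − 8 λ_k λ_ℓ / (λ_k + λ_ℓ)`, and the first part sums to `2 Tr[{Aᵢ, Aⱼ} ρ]`,
computed in the same basis.
-/

attribute [local instance] Matrix.linftyOpNormedRing Matrix.linftyOpNormedAlgebra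

namespace Matrix

variable {n : Type*} [Fintype n] [DecidableEq n]

theorem mul_diagonal_sub_diagonal_mul_apply {R : Type*} [CommRing R] (X : Matrix n n R)
    (μ : n → R) (k l : n) :
    (X * diagonal μ - diagonal μ * X) k l = (μ l - μ k) * X k l := by
  rw [sub_apply, mul_diagonal, diagonal_mul]
  ring

theorem trace_anticomm_mul_diagonal {R : Type*} [CommRing R] (X Y : Matrix n n R)
    (μ : n → R) :
    ((X * Y + Y * X) * diagonal μ).trace = ∑ k, ∑ l, (μ k + μ l) * (X k l * Y l k) := by
  have hswap : ∑ k, ∑ l, Y k l * X l k * μ k = ∑ k, ∑ l, X k l * Y l k * μ l := by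
    rw [Finset.sum_comm]
    exact Finset.sum_congr rfl fun k _ => Finset.sum_congr rfl fun l _ => by ring
  rw [add_mul, trace_add]
  simp only [trace, diag_apply, mul_diagonal]
  simp only [mul_apply, Finset.sum_mul]
  rw [hswap, ← Finset.sum_add_distrib]
  refine Finset.sum_congr rfl fun k _ => ?_
  rw [← Finset.sum_add_distrib]
  exact Finset.sum_congr rfl fun l _ => by ring

theorem conjTranspose_mul_mul_eq_diagonal {R : Type*} [CommRing R] [StarRing R]
    {P ρ : Matrix n n R} (hP : Pᴴ * P = 1) {μ : n → R}
    (h : ∀ k, ρ *ᵥ (fun a => P a k) = μ k • fun a => P a k) :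
    Pᴴ * ρ * P = diagonal μ := by
  have hcols : ρ * P = P * diagonal μ := by
    ext a k
    rw [mul_diagonal]
    simpa [mul_apply, mulVec, dotProduct, mul_comm] using congrFun (h k) a
  rw [mul_assoc, hcols, ← mul_assoc, hP, one_mul]

theorem trace_conjStarAlgAut {R : Type*} [CommRing R] [StarRing R] (u : unitary (Matrix n n R))
    (M : Matrix n n R) :
    (Unitary.conjStarAlgAut R _ u M).trace = M.trace := by
  rw [Unitary.conjStarAlgAut_apply, trace_mul_cycle, Unitary.coe_star_mul_self, one_mul]

end Matrix

-- Also true when `a + b = 0`: both sides are then `0`, by `x / 0 = 0`.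
theorem sub_sq_div_add {K : Type*} [Field K] (a b : K) :
    (a - b) ^ 2 / (a + b) = a + b - 4 * (a * b / (a + b)) := by
  rcases eq_or_ne (a + b) 0 with h | h
  · simp [h]
  · field_simp
    ring

theorem fisherBures_sum_eigenbasis {n : Type*} [Fintype n] [DecidableEq n] (lam : n → ℝ)
    (X Y : Matrix n n ℂ) :
    let Λ := diagonal fun k => (lam k : ℂ)
    ∑ k, ∑ l, ((2 / (lam k + lam l) : ℝ) : ℂ) *
        (-Complex.I • (X * Λ - Λ * X)) k l * (-Complex.I • (Y * Λ - Λ * Y)) l k =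
      2 * ((X * Y + Y * X) * Λ).trace -
        8 * ∑ k, ∑ l, ((lam k * lam l / (lam k + lam l) : ℝ) : ℂ) * X k l * Y l k := by
  intro Λ
  rw [trace_anticomm_mul_diagonal, Finset.mul_sum, Finset.mul_sum, ← Finset.sum_sub_distrib]
  refine Finset.sum_congr rfl fun k _ => ?_
  rw [Finset.mul_sum, Finset.mul_sum, ← Finset.sum_sub_distrib]
  refine Finset.sum_congr rfl fun l _ => ?_
  simp only [Λ, Matrix.smul_apply, mul_diagonal_sub_diagonal_mul_apply, smul_eq_mul]
  have hweight : ((2 / (lam k + lam l) : ℝ) : ℂ) * ((lam k : ℂ) - lam l) ^ 2 =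
      2 * ((lam k : ℂ) + lam l) - 8 * ((lam k * lam l / (lam k + lam l) : ℝ) : ℂ) := by
    push_cast
    linear_combination 2 * sub_sq_div_add (lam k : ℂ) (lam l)
  linear_combination (X k l * Y l k) * hweight -
    ((2 / (lam k + lam l) : ℝ) : ℂ) * ((lam k : ℂ) - lam l) ^ 2 * X k l * Y l k * Complex.I_sq

theorem HasDerivAt.mul_mul_star_of_star_eq_neg {𝔸 : Type*} [NormedRing 𝔸] [NormedAlgebra ℝ 𝔸]
    [StarRing 𝔸] [ContinuousStar 𝔸] [StarModule ℝ 𝔸] {W : ℝ → 𝔸} {t : ℝ} {U B : 𝔸}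
    (hW : HasDerivAt W (U * B) t) (hWt : W t = U) (hB : star B = -B) (T : 𝔸) :
    HasDerivAt (fun x => W x * T * star (W x)) (U * (B * T - T * B) * star U) t := by
  refine ((hW.mul_const T).mul hW.star).congr_deriv ?_
  rw [hWt, star_mul, hB]
  noncomm_ring

section Circuit

variable {d : ℕ}

/-- The `L∞` operator norm is not `star`-invariant; `star` is continuous as a linear map on a
finite-dimensional space. -/
instance Mat.instContinuousStar : @ContinuousStar (Mat d)
    NormedRing.toSeminormedRing.toPseudoMetricSpace.toUniformSpace.toTopologicalSpace _ :=
  ⟨(starLinearEquiv ℝ (A := Mat d)).toLinearMap.continuous_of_finiteDimensional⟩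

theorem descProd_add (f : ℕ → Mat d) (a m n : ℕ) :
    descProd f a (m + n) = descProd f (a + m) n * descProd f a m := by
  induction n with
  | zero => simp [descProd]
  | succ n ih => rw [← add_assoc, descProd, ih, descProd, ← mul_assoc, add_assoc]

theorem descProd_congr {f g : ℕ → Mat d} {a n : ℕ} (h : ∀ k, a ≤ k → k < a + n → f k = g k) :
    descProd f a n = descProd g a n := by
  induction n with
  | zero => rfl
  | succ n ih =>
    rw [descProd, descProd, h (a + n) (by omega) (by omega), ih fun k hk hk' => h k hk (by omega)]

theorem descProd_mem_unitaryGroup {f : ℕ → Mat d} (hf : ∀ j, f j ∈ unitaryGroup (Fin d) ℂ)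
    (a n : ℕ) : descProd f a n ∈ unitaryGroup (Fin d) ℂ := by
  induction n with
  | zero => exact one_mem _
  | succ n ih => exact mul_mem (hf _) ih

variable {H V : ℕ → Mat d} {φ : ℕ → ℝ}

theorem layer_eq_exp_mul (j : ℕ) :
    layer H V φ j = NormedSpace.exp (φ j • (-Complex.I • H j)) * V j := by
  rw [layer, ← smul_assoc, Complex.real_smul, mul_neg, mul_comm]

theorem layer_mem_unitaryGroup (hH : ∀ j, (H j).IsHermitian)
    (hV : ∀ j, V j ∈ unitaryGroup (Fin d) ℂ) (j : ℕ) :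
    layer H V φ j ∈ unitaryGroup (Fin d) ℂ := by
  refine mul_mem (NormedSpace.exp_mem_unitary_of_mem_skewAdjoint (𝔸 := Mat d) ?_) (hV j)
  rw [skewAdjoint.mem_iff, star_eq_conjTranspose, conjTranspose_smul, (hH j).eq]
  simp [neg_smul]

theorem UR_mem_unitaryGroup (hH : ∀ j, (H j).IsHermitian)
    (hV : ∀ j, V j ∈ unitaryGroup (Fin d) ℂ) (n : ℕ) : UR H V φ n ∈ unitaryGroup (Fin d) ℂ :=
  descProd_mem_unitaryGroup (fun _ => layer_mem_unitaryGroup hH hV _) _ _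

theorem Amat_isHermitian (hH : ∀ j, (H j).IsHermitian) (j : ℕ) :
    (Amat H V φ j).IsHermitian :=
  isHermitian_conjTranspose_mul_mul _ (hH j)

theorem UR_succ (n : ℕ) :
    UR H V φ (n + 1) = layer H V φ (n + 1) * UR H V φ n := by
  rw [UR, descProd, add_comm 1 n, UR]

theorem Ufull_eq_UL_mul_UR {J i : ℕ} (hi : i ≤ J) :
    Ufull H V φ J = UL H V φ J (i + 1) * UR H V φ i := by
  rw [Ufull, UR, UL, UR, show J = i + (J - i) by omega, descProd_add, add_comm 1 i]
  congr 2
  omega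

theorem UL_update_of_lt {J i j : ℕ} (hij : i < j) (x : ℝ) :
    UL H V (Function.update φ i x) J j = UL H V φ J j :=
  descProd_congr fun k hk _ => by rw [layer, layer, Function.update_of_ne (by omega)]

theorem UR_update_of_lt {i n : ℕ} (hni : n < i) (x : ℝ) :
    UR H V (Function.update φ i x) n = UR H V φ n :=
  descProd_congr fun k _ hk => by rw [layer, layer, Function.update_of_ne (by omega)]

/-- `U(φ + δ eᵢ) = U(φ) exp (−i δ Aᵢ)`: `Aᵢ` is `Hᵢ` moved to the input side of the circuit. -/
theorem hasDerivAt_Ufull_update (hH : ∀ j, (H j).IsHermitian)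
    (hV : ∀ j, V j ∈ unitaryGroup (Fin d) ℂ) {J i : ℕ} (hi : 1 ≤ i) (hiJ : i ≤ J) :
    HasDerivAt (fun x : ℝ => Ufull H V (Function.update φ i x) J)
      (Ufull H V φ J * (-Complex.I • Amat H V φ i)) (φ i) := by
  obtain ⟨n, rfl⟩ : ∃ n, i = n + 1 := ⟨i - 1, by omega⟩
  set K : Mat d := -Complex.I • H (n + 1)
  set L := UL H V φ J (n + 1 + 1)
  have hpath : (fun x : ℝ => Ufull H V (Function.update φ (n + 1) x) J) =
      fun x => L * (NormedSpace.exp (x • K) * V (n + 1) * UR H V φ n) := by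
    funext x
    rw [Ufull_eq_UL_mul_UR hiJ, UR_succ, UL_update_of_lt (by omega), UR_update_of_lt (by omega),
      layer_eq_exp_mul, Function.update_self]
  have hR : UR H V φ (n + 1) * (UR H V φ (n + 1))ᴴ = 1 :=
    mem_unitaryGroup_iff.mp (UR_mem_unitaryGroup hH hV (n + 1))
  rw [hpath]
  refine ((((hasDerivAt_exp_smul_const' (𝕂 := ℝ) K (φ (n + 1))).mul_const
    (V (n + 1))).mul_const (UR H V φ n)).const_mul L).congr_deriv ?_
  have hcancel :
      L * UR H V φ (n + 1) * Amat H V φ (n + 1) = L * H (n + 1) * UR H V φ (n + 1) := by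
    rw [Amat, mul_assoc L, ← mul_assoc (UR H V φ (n + 1)), ← mul_assoc (UR H V φ (n + 1)), hR,
      one_mul, mul_assoc]
  rw [Ufull_eq_UL_mul_UR hiJ, mul_smul_comm, hcancel, UR_succ, layer_eq_exp_mul]
  simp only [K, smul_mul_assoc, mul_smul_comm, mul_assoc]
  rfl

theorem hasDerivAt_rhoFun_update (hH : ∀ j, (H j).IsHermitian)
    (hV : ∀ j, V j ∈ unitaryGroup (Fin d) ℂ) (G : Mat d) (Z : ℝ) {J i : ℕ} (hi : 1 ≤ i)
    (hiJ : i ≤ J) :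
    HasDerivAt (fun x : ℝ => rhoFun H V J G Z (Function.update φ i x))
      (Ufull H V φ J * (-Complex.I • (Amat H V φ i * thermal G Z - thermal G Z * Amat H V φ i)) *
        (Ufull H V φ J)ᴴ) (φ i) := by
  have hskew : star (-Complex.I • Amat H V φ i) = -(-Complex.I • Amat H V φ i) := by
    rw [star_eq_conjTranspose, conjTranspose_smul, (Amat_isHermitian hH i).eq]
    simp
  have h := (hasDerivAt_Ufull_update hH hV hi hiJ).mul_mul_star_of_star_eq_neg
    (by rw [Function.update_eq_self]) hskew (thermal G Z)
  rwa [smul_mul_assoc, mul_smul_comm, ← smul_sub] at h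

end Circuit

section Braket

variable {d : ℕ}

theorem braket_mulVec_mulVec (U M : Mat d) (a b : Fin d → ℂ) :
    braket (U *ᵥ a) M (U *ᵥ b) = braket a (Uᴴ * M * U) b := by
  rw [braket, braket, star_mulVec, mulVec_mulVec, ← dotProduct_mulVec, mulVec_mulVec, ← mul_assoc]

theorem braket_eq_conjTranspose_mul_mul_apply (v : Fin d → Fin d → ℂ) (M : Mat d) (k l : Fin d) :
    braket (v k) M (v l) = ((of v)ᵀᴴ * M * (of v)ᵀ) k l := by
  simp only [braket, dotProduct, mulVec, mul_apply, Finset.mul_sum, Finset.sum_mul]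
  rw [Finset.sum_comm]
  simp [mul_assoc]

theorem transpose_of_mem_unitaryGroup_of_orthonormal {v : Fin d → Fin d → ℂ}
    (hortho : ∀ k l, star (v k) ⬝ᵥ v l = if k = l then 1 else 0) :
    (of v)ᵀ ∈ unitaryGroup (Fin d) ℂ := by
  refine mem_unitaryGroup_iff'.mpr (ext fun k l => ?_)
  rw [star_eq_conjTranspose, ← mul_one (of v)ᵀᴴ, ← braket_eq_conjTranspose_mul_mul_apply,
    braket, one_mulVec, hortho, one_apply]

end Braket

theorem fisher_bures_intermediate_pqc_general {d J : ℕ}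
    (H V G : _) (hH : ∀ j, (H j : Mat d).IsHermitian)
    (hV : ∀ j, V j ∈ Matrix.unitaryGroup (Fin d) ℂ)
    (Z : ℝ)
    (v : Fin d → Fin d → ℂ)
    (hortho : ∀ k l, star (v k) ⬝ᵥ v l = if k = l then 1 else 0)
    (lam : Fin d → ℝ)
    (hrhov : ∀ k, (thermal G Z).mulVec (v k) = (lam k : ℂ) • v k)
    (φ : ℕ → ℝ) (i j : ℕ) (hi1 : 1 ≤ i) (hiJ : i ≤ J) (hj1 : 1 ≤ j) (hjJ : j ≤ J)
    (Di Dj : Mat d)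
    (hDi : HasDerivAt (fun x : ℝ => rhoFun H V J G Z (Function.update φ i x)) Di (φ i))
    (hDj : HasDerivAt (fun x : ℝ => rhoFun H V J G Z (Function.update φ j x)) Dj (φ j)) :
    ∑ k : Fin d, ∑ l : Fin d,
        ((2 / (lam k + lam l) : ℝ) : ℂ) *
          braket ((Ufull H V φ J).mulVec (v k)) Di ((Ufull H V φ J).mulVec (v l)) *
          braket ((Ufull H V φ J).mulVec (v l)) Dj ((Ufull H V φ J).mulVec (v k)) =
      2 * ((Amat H V φ i * Amat H V φ j + Amat H V φ j * Amat H V φ i) *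
          thermal G Z).trace -
        8 * ∑ k : Fin d, ∑ l : Fin d,
          ((lam k * lam l / (lam k + lam l) : ℝ) : ℂ) *
            braket (v k) (Amat H V φ i) (v l) * braket (v l) (Amat H V φ j) (v k) := by
  set U := Ufull H V φ J
  set P : unitaryGroup (Fin d) ℂ :=
    ⟨(of v)ᵀ, transpose_of_mem_unitaryGroup_of_orthonormal hortho⟩
  set c := Unitary.conjStarAlgAut ℂ (Mat d) (star P)
  set Λ : Mat d := diagonal fun k => (lam k : ℂ)
  have hc (M : Mat d) : (of v)ᵀᴴ * M * (of v)ᵀ = c M :=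
    (Unitary.conjStarAlgAut_star_apply P M).symm
  have hΛ : c (thermal G Z) = Λ := by
    rw [← hc]
    exact conjTranspose_mul_mul_eq_diagonal (Unitary.coe_star_mul_self P) hrhov
  have hU : Uᴴ * U = 1 := mem_unitaryGroup_iff'.mp (UR_mem_unitaryGroup hH hV J)
  have hD (m : ℕ) (D : Mat d) (hm : 1 ≤ m) (hmJ : m ≤ J)
      (hDm : HasDerivAt (fun x : ℝ => rhoFun H V J G Z (Function.update φ m x)) D (φ m))
      (k l : Fin d) :
      braket (U *ᵥ v k) D (U *ᵥ v l) =
        (-Complex.I • (c (Amat H V φ m) * Λ - Λ * c (Amat H V φ m))) k l := by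
    rw [← (hasDerivAt_rhoFun_update hH hV G Z hm hmJ).unique hDm, braket_mulVec_mulVec,
      braket_eq_conjTranspose_mul_mul_apply, hc]
    have hcancel (X : Mat d) : Uᴴ * (U * X * Uᴴ) * U = X := by
      rw [← mul_assoc, ← mul_assoc, hU, one_mul, mul_assoc, hU, mul_one]
    rw [hcancel, map_smul, map_sub, map_mul, map_mul, hΛ]
  have htrace :
      ((Amat H V φ i * Amat H V φ j + Amat H V φ j * Amat H V φ i) * thermal G Z).trace =
      ((c (Amat H V φ i) * c (Amat H V φ j) + c (Amat H V φ j) * c (Amat H V φ i)) * Λ).trace := by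
    rw [← Matrix.trace_conjStarAlgAut (star P), map_mul, map_add, map_mul, map_mul, hΛ]
  simp only [hD i Di hi1 hiJ hDi, hD j Dj hj1 hjJ hDj, htrace,
    braket_eq_conjTranspose_mul_mul_apply, hc]
  exact fisherBures_sum_eigenbasis lam _ _

/-- Intermediate identity for the Fisher–Bures information matrix elements:
`I^{FB}_{ij}(φ) = 2 Tr[{A_i,A_j} ρ] − 8 Σ_{k,ℓ} (λ_k λ_ℓ/(λ_k+λ_ℓ)) ⟨k̃|A_i|ℓ̃⟩⟨ℓ̃|A_j|k̃⟩`. -/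
theorem fisher_bures_intermediate_pqc {d J : ℕ} (hd : 1 ≤ d)
    (H V G : _) (hH : ∀ j, (H j : Mat d).IsHermitian)
    (hV : ∀ j, V j ∈ Matrix.unitaryGroup (Fin d) ℂ)
    (hG : (G : Mat d).IsHermitian)
    (Z : ℝ) (hZpos : 0 < Z) (hZ : (NormedSpace.exp (-G)).trace = (Z : ℂ))
    (v : Fin d → Fin d → ℂ)
    (hortho : ∀ k l, star (v k) ⬝ᵥ v l = if k = l then 1 else 0)
    (lam : Fin d → ℝ) (hlampos : ∀ k, 0 < lam k)
    (hrhov : ∀ k, (thermal G Z).mulVec (v k) = (lam k : ℂ) • v k)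
    (φ : ℕ → ℝ) (i j : ℕ) (hi1 : 1 ≤ i) (hiJ : i ≤ J) (hj1 : 1 ≤ j) (hjJ : j ≤ J)
    (Di Dj : Mat d)
    (hDi : HasDerivAt (fun x : ℝ => rhoFun H V J G Z (Function.update φ i x)) Di (φ i))
    (hDj : HasDerivAt (fun x : ℝ => rhoFun H V J G Z (Function.update φ j x)) Dj (φ j)) :
    ∑ k : Fin d, ∑ l : Fin d,
        ((2 / (lam k + lam l) : ℝ) : ℂ) *
          braket ((Ufull H V φ J).mulVec (v k)) Di ((Ufull H V φ J).mulVec (v l)) *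
          braket ((Ufull H V φ J).mulVec (v l)) Dj ((Ufull H V φ J).mulVec (v k)) =
      2 * ((Amat H V φ i * Amat H V φ j + Amat H V φ j * Amat H V φ i) *
          thermal G Z).trace -
        8 * ∑ k : Fin d, ∑ l : Fin d,
          ((lam k * lam l / (lam k + lam l) : ℝ) : ℂ) *
            braket (v k) (Amat H V φ i) (v l) * braket (v l) (Amat H V φ j) (v k) :=
  fisher_bures_intermediate_pqc_general H V G hH hV Z v hortho lam hrhov φ i j hi1 hiJ hj1 hjJ Di Dj
    hDi hDj
end
end

section
/- (The high-peak-tent density is a probability density.) Let p(t) = (2/π) ln|coth(πt/2)|. Then p(t) ≥ 0 for all t ∈ ℝ \ {0}, p is integrable on ℝ, and ∫_ℝ p(t) dt = 1. -/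
/-!
For `u > 0` put `x = exp (-π u)`, so that `coth (π u / 2) = (1 + x) / (1 - x)` and
`p u = (2/π) (log (1 + x) - log (1 - x)) = (4/π) ∑ₖ x^(2k+1) / (2k+1)`.
Integrating the nonnegative series termwise over `(0, ∞)` gives
`(4/π²) ∑ₖ 1/(2k+1)² = (4/π²)(π²/8) = 1/2`, and `p` is even.
-/

open MeasureTheory

noncomputable section

/-- The high-peak-tent density `p(t) = (2/π) ln |coth (π t / 2)|`. -/
def hptDensity (t : ℝ) : ℝ :=
  (2 / Real.pi) * Real.log |Real.cosh (Real.pi * t / 2) / Real.sinh (Real.pi * t / 2)|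

open Real Set

theorem hasSum_one_div_odd_sq :
    HasSum (fun k : ℕ => 1 / (2 * (k : ℝ) + 1) ^ 2) (π ^ 2 / 8) := by
  set f : ℕ → ℝ := fun n => 1 / (n : ℝ) ^ 2
  have h_even : HasSum (fun k => f (2 * k)) (π ^ 2 / 24) := by
    have hf : (fun k => f (2 * k)) = fun k => 1 / 4 * f k := by
      ext k; simp only [f]; push_cast; ring
    rw [hf, show π ^ 2 / 24 = 1 / 4 * (π ^ 2 / 6) by ring]
    exact hasSum_zeta_two.mul_left _
  obtain ⟨s, h_odd⟩ : Summable fun k => f (2 * k + 1) :=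
    hasSum_zeta_two.summable.comp_injective (i := fun k => 2 * k + 1) fun a b h => by
      simpa using h
  obtain rfl : s = π ^ 2 / 8 := by
    linarith [(h_even.even_add_odd h_odd).unique hasSum_zeta_two]
  simpa [f] using h_odd

namespace Real

theorem log_abs_coth_nonneg (x : ℝ) : 0 ≤ log |cosh x / sinh x| := by
  rw [← inv_div, ← tanh_eq_sinh_div_cosh, abs_inv, log_inv, neg_nonneg]
  exact log_nonpos (abs_nonneg _) (abs_tanh_lt_one x).le

theorem cosh_div_sinh_eq (x : ℝ) :
    cosh x / sinh x = (1 + exp (-(2 * x))) / (1 - exp (-(2 * x))) := by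
  rw [cosh_eq, sinh_eq, div_div_div_cancel_right₀ two_ne_zero,
    ← mul_div_mul_left _ _ (exp_pos (-x)).ne']
  congr 1 <;> simp only [mul_add, mul_sub, ← exp_add] <;> ring_nf <;> simp

theorem hasSum_log_coth {x : ℝ} (hx : 0 < x) :
    HasSum (fun k : ℕ => 2 / (2 * k + 1) * exp (-((2 * k + 1) * (2 * x))))
      (log (cosh x / sinh x)) := by
  have hq : |exp (-(2 * x))| < 1 := by
    rw [abs_of_pos (exp_pos _), exp_lt_one_iff]
    linarith
  rw [cosh_div_sinh_eq, log_div (by positivity) (by linarith [abs_lt.mp hq])]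
  convert hasSum_log_sub_log_of_abs_lt_one hq using 2 with k
  rw [← exp_nat_mul]
  push_cast
  ring_nf

theorem integral_exp_neg_mul_Ioi_zero {b : ℝ} (hb : 0 < b) :
    ∫ u in Ioi (0 : ℝ), exp (-b * u) = 1 / b := by
  rw [integral_exp_mul_Ioi (neg_lt_zero.mpr hb)]
  simp [neg_div]

end Real

def hptSeriesTerm (k : ℕ) (u : ℝ) : ℝ :=
  4 / (π * (2 * k + 1)) * exp (-((2 * k + 1) * π) * u)

theorem hptSeriesTerm_nonneg (k : ℕ) (u : ℝ) : 0 ≤ hptSeriesTerm k u := by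
  unfold hptSeriesTerm
  positivity

theorem integrableOn_Ioi_hptSeriesTerm (k : ℕ) : IntegrableOn (hptSeriesTerm k) (Ioi 0) :=
  (integrableOn_exp_mul_Ioi (neg_lt_zero.mpr (by positivity)) 0).const_mul _

theorem integral_Ioi_hptSeriesTerm (k : ℕ) :
    ∫ u in Ioi (0 : ℝ), hptSeriesTerm k u = 4 / π ^ 2 * (1 / (2 * k + 1) ^ 2) := by
  unfold hptSeriesTerm
  rw [integral_const_mul, integral_exp_neg_mul_Ioi_zero (by positivity)]
  have : (2 * (k : ℝ) + 1) ≠ 0 := by positivity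
  field_simp

theorem hasSum_integral_Ioi_hptSeriesTerm :
    HasSum (fun k => ∫ u in Ioi (0 : ℝ), hptSeriesTerm k u) (1 / 2) := by
  simp_rw [integral_Ioi_hptSeriesTerm]
  rw [show (1 : ℝ) / 2 = 4 / π ^ 2 * (π ^ 2 / 8) by field_simp; norm_num]
  exact hasSum_one_div_odd_sq.mul_left _

theorem hptDensity_nonneg (t : ℝ) : 0 ≤ hptDensity t :=
  mul_nonneg (by positivity) (log_abs_coth_nonneg _)

theorem hptDensity_abs (t : ℝ) : hptDensity |t| = hptDensity t := by
  rcases abs_choice t with h | h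
  · rw [h]
  · rw [h, hptDensity, hptDensity, mul_neg, neg_div, cosh_neg, sinh_neg, div_neg, abs_neg]

theorem hasSum_hptSeriesTerm {u : ℝ} (hu : 0 < u) :
    HasSum (hptSeriesTerm · u) (hptDensity u) := by
  have hx : 0 < π * u / 2 := by positivity
  have h_terms (k : ℕ) :
      2 / π * (2 / (2 * k + 1) * exp (-((2 * k + 1) * (2 * (π * u / 2))))) =
        hptSeriesTerm k u := by
    rw [hptSeriesTerm, show (2 * k + 1) * (2 * (π * u / 2)) = (2 * k + 1) * π * u by ring]
    field_simp
    ring_nf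
  rw [hptDensity, abs_of_pos (div_pos (cosh_pos _) (sinh_pos_iff.mpr hx))]
  simpa only [h_terms] using (hasSum_log_coth hx).mul_left (2 / π)

theorem integral_Ioi_hptDensity : ∫ u in Ioi (0 : ℝ), hptDensity u = 1 / 2 := by
  have h_norm : ∀ k, ∫ u in Ioi (0 : ℝ), ‖hptSeriesTerm k u‖ = ∫ u in Ioi 0, hptSeriesTerm k u :=
    fun k => by simp only [norm_of_nonneg (hptSeriesTerm_nonneg k _)]
  have h_termwise := hasSum_integral_of_summable_integral_norm integrableOn_Ioi_hptSeriesTerm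
    (by simpa only [h_norm] using hasSum_integral_Ioi_hptSeriesTerm.summable)
  rw [hasSum_integral_Ioi_hptSeriesTerm.unique h_termwise]
  exact setIntegral_congr_fun measurableSet_Ioi fun u hu => (hasSum_hptSeriesTerm hu).tsum_eq.symm

/-- The high-peak-tent density is a probability density: it is nonnegative away from `0`,
integrable on `ℝ`, and integrates to `1`. -/
theorem hptDensity_isProbabilityDensity :
    (∀ t : ℝ, t ≠ 0 → 0 ≤ hptDensity t) ∧
      Integrable hptDensity ∧
      (∫ t : ℝ, hptDensity t) = 1 := by
  have h_one : ∫ t, hptDensity t = 1 := by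
    have h := integral_comp_abs (f := hptDensity)
    simp only [hptDensity_abs] at h
    rw [h, integral_Ioi_hptDensity]
    norm_num
  -- A non-integrable function has Bochner integral `0`, so integrability comes for free.
  exact ⟨fun t _ => hptDensity_nonneg t, integrable_of_integral_eq_one h_one, h_one⟩
end
end
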